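/- arXiv:2212.14577 — 5 statements merged into one kernel-verified Lean document; each statement's English description precedes it below -/
import Mathlib

section
/- Let (x̄,ȳ) be a T-stationary point of the regularized continuous reformulation R. Then the summation inequality constraint is active at (x̄,ȳ), i.e. ∑_{i=1}^n ȳ_i = n−s. -/
/-!
Feasibility and `s < n` give an index with `ȳ_i > 0`; such an index lies in neither `a10` nor
`a00`, so the `y`-part of the stationarity equation there reads `c_i = μ̄₃ - μ̄₂ᵢ [i ∈ E(ȳ)]`.
Hence `μ̄₃ ≥ c_i > 0`, and complementary slackness makes the summation constraint active.
-/

open scoped Classical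
open Finset Filter Topology

noncomputable section
namespace Scholtes

/-- Vectors in ℝⁿ. -/
abbrev Vec (n : ℕ) := Fin n → ℝ

variable {n : ℕ} {P Q : Type*} [Fintype P] [Fintype Q]

/-- Euclidean dot product. -/
def dot (u v : Vec n) : ℝ := ∑ i, u i * v i

/-- Gradient: vector of partial derivatives. -/
def grad (f : Vec n → ℝ) (x : Vec n) : Vec n := fun i => fderiv ℝ f x (Pi.single i 1)

/-- Hessian bilinear form of `L` at `z`, evaluated at directions `ξ`, `ζ`. -/
def hess (L : Vec n × Vec n → ℝ) (z ξ ζ : Vec n × Vec n) : ℝ :=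
  fderiv ℝ (fun w => fderiv ℝ L w ξ) z ζ

/-- The pair vector (e_i, 0) ∈ ℝ²ⁿ. -/
def ex (i : Fin n) : Vec n × Vec n := (Pi.single i 1, 0)

/-- The pair vector (0, e_i) ∈ ℝ²ⁿ. -/
def ey (i : Fin n) : Vec n × Vec n := (0, Pi.single i 1)

/-- The pair vector (0, e) ∈ ℝ²ⁿ, where e is the all-ones vector. -/
def eAll : Vec n × Vec n := (0, fun _ => 1)

/-- The pair vector (y_i e_i, x_i e_i) ∈ ℝ²ⁿ. -/
def hvec (x y : Vec n) (i : Fin n) : Vec n × Vec n := (Pi.single i (y i), Pi.single i (x i))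

/-- The number of negative eigenvalues of the bilinear form `B` restricted to the
(sub)space `T`, expressed as the maximal dimension of a linear subspace of `T` on
which the associated quadratic form is negative definite. -/
def negIndex (B : (Vec n × Vec n) → (Vec n × Vec n) → ℝ) (T : (Vec n × Vec n) → Prop) : ℕ :=
  sSup {d : ℕ | ∃ W : Submodule ℝ (Vec n × Vec n),
    (∀ ξ ∈ W, T ξ) ∧ Module.finrank ℝ W = d ∧ ∀ ξ ∈ W, ξ ≠ 0 → B ξ ξ < 0}

/-- The data and standing assumptions of the paper: objective `f`, equality
constraints `h`, inequality constraints `g`, positive pairwise different linear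
coefficients `c`, cardinality bound `s` and regularization parameter `ε`. -/
structure Setting (n : ℕ) (P Q : Type*) [Fintype P] [Fintype Q] where
  f : Vec n → ℝ
  h : P → Vec n → ℝ
  g : Q → Vec n → ℝ
  c : Vec n
  s : ℕ
  ε : ℝ
  hn : 1 ≤ n
  hf : ContDiff ℝ 2 f
  hh : ∀ p, ContDiff ℝ 2 (h p)
  hg : ∀ q, ContDiff ℝ 2 (g q)
  hcpos : ∀ i, 0 < c i
  hcinj : Function.Injective c
  hs : s < n
  hεpos : 0 < ε
  hεle : ε ≤ 1 / ((n : ℝ) - s)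

/-- Index set a01: x̄_i = 0, ȳ_i > 0. -/
def a01 (x y : Vec n) : Finset (Fin n) := univ.filter fun i => x i = 0 ∧ 0 < y i

/-- Index set a10: x̄_i ≠ 0, ȳ_i = 0. -/
def a10 (x y : Vec n) : Finset (Fin n) := univ.filter fun i => x i ≠ 0 ∧ y i = 0

/-- Index set a00: x̄_i = 0, ȳ_i = 0. -/
def a00 (x y : Vec n) : Finset (Fin n) := univ.filter fun i => x i = 0 ∧ y i = 0

/-- Index set N(y): y_i = 0. -/
def Nact (y : Vec n) : Finset (Fin n) := univ.filter fun i => y i = 0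

/-- Index set H≥(x,y): x_i y_i = −t. -/
def Hge (t : ℝ) (x y : Vec n) : Finset (Fin n) := univ.filter fun i => x i * y i = -t

/-- Index set H≤(x,y): x_i y_i = t. -/
def Hle (t : ℝ) (x y : Vec n) : Finset (Fin n) := univ.filter fun i => x i * y i = t

/-- Index set H(x,y) = H≥ ∪ H≤. -/
def Hact (t : ℝ) (x y : Vec n) : Finset (Fin n) := Hge t x y ∪ Hle t x y

/-- Active inequality constraints Q0(x). -/
def Q0 (D : Setting n P Q) (x : Vec n) : Finset Q := univ.filter fun q => D.g q x = 0

/-- Active upper bounds E(y): y_i = 1 + ε. -/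
def Eact (D : Setting n P Q) (y : Vec n) : Finset (Fin n) := univ.filter fun i => y i = 1 + D.ε

/-- Index set O(x,y) = complement of E(y) ∪ N(y) ∪ H(x,y). -/
def Oact (D : Setting n P Q) (t : ℝ) (x y : Vec n) : Finset (Fin n) :=
  (Eact D y ∪ Nact y ∪ Hact t x y)ᶜ

/-- Feasibility for the regularized continuous reformulation R. -/
def feasR (D : Setting n P Q) (x y : Vec n) : Prop :=
  (∀ p, D.h p x = 0) ∧ (∀ q, 0 ≤ D.g q x) ∧ ((n : ℝ) - D.s ≤ ∑ i, y i) ∧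
  (∀ i, x i * y i = 0) ∧ (∀ i, 0 ≤ y i ∧ y i ≤ 1 + D.ε)

/-- Feasibility for the Scholtes-type regularization S(t). -/
def feasS (D : Setting n P Q) (t : ℝ) (x y : Vec n) : Prop :=
  (∀ p, D.h p x = 0) ∧ (∀ q, 0 ≤ D.g q x) ∧ ((n : ℝ) - D.s ≤ ∑ i, y i) ∧
  (∀ i, -t ≤ x i * y i ∧ x i * y i ≤ t) ∧ (∀ i, 0 ≤ y i ∧ y i ≤ 1 + D.ε)

/-- Multipliers for T-stationarity (defined on the whole index ranges). -/
structure TMult (n : ℕ) (P Q : Type*) where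
  lam : P → ℝ
  mu1 : Q → ℝ
  mu2 : Fin n → ℝ
  mu3 : ℝ
  sig1 : Fin n → ℝ
  sig2 : Fin n → ℝ
  rho1 : Fin n → ℝ
  rho2 : Fin n → ℝ

/-- The T-stationarity equation (1) of Definition 2. -/
def TStatEq (D : Setting n P Q) (x y : Vec n) (M : TMult n P Q) : Prop :=
  ((grad D.f x, D.c) : Vec n × Vec n) =
    (∑ p, M.lam p • ((grad (D.h p) x, (0 : Vec n)) : Vec n × Vec n))
    + (∑ q ∈ Q0 D x, M.mu1 q • ((grad (D.g q) x, (0 : Vec n)) : Vec n × Vec n))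
    - (∑ i ∈ Eact D y, M.mu2 i • ey i)
    + M.mu3 • eAll
    + (∑ i ∈ a01 x y, M.sig1 i • ex i)
    + (∑ i ∈ a10 x y, M.sig2 i • ey i)
    + (∑ i ∈ a00 x y, (M.rho1 i • ex i + M.rho2 i • ey i))

/-- (x,y) is a T-stationary point of R with multipliers M. -/
def TStatAt (D : Setting n P Q) (x y : Vec n) (M : TMult n P Q) : Prop :=
  feasR D x y ∧
  (∀ q ∈ Q0 D x, 0 ≤ M.mu1 q) ∧
  (∀ i ∈ Eact D y, 0 ≤ M.mu2 i) ∧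
  0 ≤ M.mu3 ∧
  M.mu3 * ((∑ i, y i) - ((n : ℝ) - D.s)) = 0 ∧
  (∀ i ∈ a00 x y, M.rho1 i = 0 ∨ M.rho2 i ≤ 0) ∧
  TStatEq D x y M

/-- (x,y) is a T-stationary point of R. -/
def TStat (D : Setting n P Q) (x y : Vec n) : Prop := ∃ M, TStatAt D x y M

/-- MPOC-tailored LICQ at a feasible point (x,y) of R: the indicated family of
vectors in ℝ²ⁿ is linearly independent. -/
def MPOC_LICQ (D : Setting n P Q) (x y : Vec n) : Prop :=
  ∀ (lam : P → ℝ) (mu1 : Q → ℝ) (mu2 : Fin n → ℝ) (mu3 : ℝ) (s1 s2 : Fin n → ℝ),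
    ((∑ i, y i) ≠ (n : ℝ) - D.s → mu3 = 0) →
    (∑ p, lam p • ((grad (D.h p) x, (0 : Vec n)) : Vec n × Vec n))
    + (∑ q ∈ Q0 D x, mu1 q • ((grad (D.g q) x, (0 : Vec n)) : Vec n × Vec n))
    + (∑ i ∈ Eact D y, mu2 i • ey i)
    + mu3 • eAll
    + (∑ i ∈ a01 x y ∪ a00 x y, s1 i • ex i)
    + (∑ i ∈ a10 x y ∪ a00 x y, s2 i • ey i) = 0 →
    (∀ p, lam p = 0) ∧ (∀ q ∈ Q0 D x, mu1 q = 0) ∧ (∀ i ∈ Eact D y, mu2 i = 0) ∧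
    mu3 = 0 ∧ (∀ i ∈ a01 x y ∪ a00 x y, s1 i = 0) ∧ (∀ i ∈ a10 x y ∪ a00 x y, s2 i = 0)

/-- The Lagrange function L^R associated with the T-stationary point (x̄,ȳ)
and multipliers M. -/
def LagR (D : Setting n P Q) (xb yb : Vec n) (M : TMult n P Q) (z : Vec n × Vec n) : ℝ :=
  D.f z.1 + dot D.c z.2
    - (∑ p, M.lam p * D.h p z.1)
    - (∑ q ∈ Q0 D xb, M.mu1 q * D.g q z.1)
    + (∑ i ∈ Eact D yb, M.mu2 i * (z.2 i - (1 + D.ε)))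
    - M.mu3 * ((∑ i, z.2 i) - ((n : ℝ) - D.s))
    - (∑ i ∈ a01 xb yb, M.sig1 i * z.1 i)
    - (∑ i ∈ a10 xb yb, M.sig2 i * z.2 i)
    - (∑ i ∈ a00 xb yb, (M.rho1 i * z.1 i + M.rho2 i * z.2 i))

/-- Membership in the tangent space T^R at (x̄,ȳ). -/
def inTR (D : Setting n P Q) (x y : Vec n) (ξ : Vec n × Vec n) : Prop :=
  (∀ p, dot (grad (D.h p) x) ξ.1 = 0) ∧
  (∀ q ∈ Q0 D x, dot (grad (D.g q) x) ξ.1 = 0) ∧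
  (∀ i ∈ Eact D y, ξ.2 i = 0) ∧
  ((∑ i, y i) = (n : ℝ) - D.s → (∑ i, ξ.2 i) = 0) ∧
  (∀ i ∈ a00 x y ∪ a01 x y, ξ.1 i = 0) ∧
  (∀ i ∈ a00 x y ∪ a10 x y, ξ.2 i = 0)

/-- Nondegenerate T-stationary point with multipliers M (NDT1–NDT4). -/
def NondegTStatAt (D : Setting n P Q) (x y : Vec n) (M : TMult n P Q) : Prop :=
  TStatAt D x y M ∧
  MPOC_LICQ D x y ∧
  (∀ q ∈ Q0 D x, 0 < M.mu1 q) ∧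
  (∀ i ∈ Eact D y, 0 < M.mu2 i) ∧
  ((∑ i, y i) = (n : ℝ) - D.s → 0 < M.mu3) ∧
  (∀ i ∈ a00 x y, M.rho1 i ≠ 0 ∧ M.rho2 i < 0) ∧
  (∀ ξ, inTR D x y ξ → (∀ ζ, inTR D x y ζ → hess (LagR D x y M) (x, y) ξ ζ = 0) → ξ = 0)

/-- T-index: quadratic index (number of negative eigenvalues of the restricted
Hessian of L^R) plus the biactive index |a00|. -/
def TIndex (D : Setting n P Q) (x y : Vec n) (M : TMult n P Q) : ℕ :=
  negIndex (hess (LagR D x y M) (x, y)) (inTR D x y) + (a00 x y).card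

/-- Multipliers for KKT points of S(t) (defined on the whole index ranges). -/
structure SMult (n : ℕ) (P Q : Type*) where
  lam : P → ℝ
  mu1 : Q → ℝ
  mu2 : Fin n → ℝ
  mu3 : ℝ
  etaGe : Fin n → ℝ
  etaLe : Fin n → ℝ
  nu : Fin n → ℝ

/-- The KKT equation for S(t). -/
def KKTEq (D : Setting n P Q) (t : ℝ) (x y : Vec n) (M : SMult n P Q) : Prop :=
  ((grad D.f x, D.c) : Vec n × Vec n) =
    (∑ p, M.lam p • ((grad (D.h p) x, (0 : Vec n)) : Vec n × Vec n))
    + (∑ q ∈ Q0 D x, M.mu1 q • ((grad (D.g q) x, (0 : Vec n)) : Vec n × Vec n))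
    - (∑ i ∈ Eact D y, M.mu2 i • ey i)
    + M.mu3 • eAll
    + (∑ i ∈ Hge t x y, M.etaGe i • hvec x y i)
    - (∑ i ∈ Hle t x y, M.etaLe i • hvec x y i)
    + (∑ i ∈ Nact y, M.nu i • ey i)

/-- (x,y) is a KKT point of S(t) with multipliers M. -/
def KKTAt (D : Setting n P Q) (t : ℝ) (x y : Vec n) (M : SMult n P Q) : Prop :=
  feasS D t x y ∧
  (∀ q ∈ Q0 D x, 0 ≤ M.mu1 q) ∧
  (∀ i ∈ Eact D y, 0 ≤ M.mu2 i) ∧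
  0 ≤ M.mu3 ∧
  M.mu3 * ((∑ i, y i) - ((n : ℝ) - D.s)) = 0 ∧
  (∀ i ∈ Hge t x y, 0 ≤ M.etaGe i) ∧
  (∀ i ∈ Hle t x y, 0 ≤ M.etaLe i) ∧
  (∀ i ∈ Nact y, 0 ≤ M.nu i) ∧
  KKTEq D t x y M

/-- (x,y) is a KKT point of S(t). -/
def KKT (D : Setting n P Q) (t : ℝ) (x y : Vec n) : Prop := ∃ M, KKTAt D t x y M

/-- LICQ at a feasible point (x,y) of S(t). -/
def LICQ (D : Setting n P Q) (t : ℝ) (x y : Vec n) : Prop :=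
  ∀ (lam : P → ℝ) (mu1 : Q → ℝ) (mu2 : Fin n → ℝ) (mu3 : ℝ) (eta nu : Fin n → ℝ),
    ((∑ i, y i) ≠ (n : ℝ) - D.s → mu3 = 0) →
    (∑ p, lam p • ((grad (D.h p) x, (0 : Vec n)) : Vec n × Vec n))
    + (∑ q ∈ Q0 D x, mu1 q • ((grad (D.g q) x, (0 : Vec n)) : Vec n × Vec n))
    + (∑ i ∈ Eact D y, mu2 i • ey i)
    + mu3 • eAll
    + (∑ i ∈ Hact t x y, eta i • hvec x y i)
    + (∑ i ∈ Nact y, nu i • ey i) = 0 →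
    (∀ p, lam p = 0) ∧ (∀ q ∈ Q0 D x, mu1 q = 0) ∧ (∀ i ∈ Eact D y, mu2 i = 0) ∧
    mu3 = 0 ∧ (∀ i ∈ Hact t x y, eta i = 0) ∧ (∀ i ∈ Nact y, nu i = 0)

/-- The Lagrange function L^S associated with the KKT point (x̄,ȳ) of S(t)
and multipliers M. -/
def LagS (D : Setting n P Q) (t : ℝ) (xb yb : Vec n) (M : SMult n P Q)
    (z : Vec n × Vec n) : ℝ :=
  D.f z.1 + dot D.c z.2
    - (∑ p, M.lam p * D.h p z.1)
    - (∑ q ∈ Q0 D xb, M.mu1 q * D.g q z.1)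
    + (∑ i ∈ Eact D yb, M.mu2 i * (z.2 i - (1 + D.ε)))
    - M.mu3 * ((∑ i, z.2 i) - ((n : ℝ) - D.s))
    - (∑ i ∈ Hge t xb yb, M.etaGe i * (z.1 i * z.2 i + t))
    + (∑ i ∈ Hle t xb yb, M.etaLe i * (z.1 i * z.2 i - t))
    - (∑ i ∈ Nact yb, M.nu i * z.2 i)

/-- Membership in the tangent space T^S at (x,y) for S(t). -/
def inTS (D : Setting n P Q) (t : ℝ) (x y : Vec n) (ξ : Vec n × Vec n) : Prop :=
  (∀ p, dot (grad (D.h p) x) ξ.1 = 0) ∧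
  (∀ q ∈ Q0 D x, dot (grad (D.g q) x) ξ.1 = 0) ∧
  (∀ i ∈ Eact D y, ξ.2 i = 0) ∧
  ((∑ i, y i) = (n : ℝ) - D.s → (∑ i, ξ.2 i) = 0) ∧
  (∀ i ∈ Hact t x y, y i * ξ.1 i + x i * ξ.2 i = 0) ∧
  (∀ i ∈ Nact y, ξ.2 i = 0)

/-- Nondegenerate KKT point of S(t) with multipliers M (ND1–ND3). -/
def NondegKKTAt (D : Setting n P Q) (t : ℝ) (x y : Vec n) (M : SMult n P Q) : Prop :=
  KKTAt D t x y M ∧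
  LICQ D t x y ∧
  (∀ q ∈ Q0 D x, 0 < M.mu1 q) ∧
  (∀ i ∈ Eact D y, 0 < M.mu2 i) ∧
  (∀ i ∈ Hge t x y, 0 < M.etaGe i) ∧
  (∀ i ∈ Hle t x y, 0 < M.etaLe i) ∧
  (∀ i ∈ Nact y, 0 < M.nu i) ∧
  ((∑ i, y i) = (n : ℝ) - D.s → 0 < M.mu3) ∧
  (∀ ξ, inTS D t x y ξ → (∀ ζ, inTS D t x y ζ → hess (LagS D t x y M) (x, y) ξ ζ = 0) → ξ = 0)

/-- Quadratic index of a KKT point of S(t): number of negative eigenvalues of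
the restricted Hessian of L^S. -/
def QIdx (D : Setting n P Q) (t : ℝ) (x y : Vec n) (M : SMult n P Q) : ℕ :=
  negIndex (hess (LagS D t x y M) (x, y)) (inTS D t x y)

theorem TStatEq.c_apply {D : Setting n P Q} {x y : Vec n} {M : TMult n P Q}
    (hEq : TStatEq D x y M) (i : Fin n) :
    D.c i = -(if i ∈ Eact D y then M.mu2 i else 0) + M.mu3
      + (if i ∈ a10 x y then M.sig2 i else 0) + (if i ∈ a00 x y then M.rho2 i else 0) := by
  have hc := congrFun (congrArg Prod.snd hEq) i
  simp only [Prod.snd_add, Prod.snd_sub, Prod.snd_sum, Prod.smul_snd, ex, ey, eAll,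
    smul_zero, Finset.sum_const_zero, Finset.sum_apply, Pi.add_apply, Pi.sub_apply,
    Pi.smul_apply, smul_eq_mul, Pi.single_apply, mul_ite, mul_one, mul_zero,
    Finset.sum_ite_eq, Pi.zero_apply, add_zero, zero_add] at hc
  rw [hc]
  ring

theorem notMem_a10_of_pos {x y : Vec n} {i : Fin n} (hy : 0 < y i) : i ∉ a10 x y := by
  simp [a10, hy.ne']

theorem notMem_a00_of_pos {x y : Vec n} {i : Fin n} (hy : 0 < y i) : i ∉ a00 x y := by
  simp [a00, hy.ne']

theorem TStatAt.c_le_mu3 {D : Setting n P Q} {x y : Vec n} {M : TMult n P Q}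
    (hT : TStatAt D x y M) {i : Fin n} (hy : 0 < y i) : D.c i ≤ M.mu3 := by
  obtain ⟨-, -, hmu2, -, -, -, hEq⟩ := hT
  have hmu2i : 0 ≤ if i ∈ Eact D y then M.mu2 i else 0 := by
    split_ifs with hE
    exacts [hmu2 i hE, le_rfl]
  rw [hEq.c_apply i, if_neg (notMem_a10_of_pos hy), if_neg (notMem_a00_of_pos hy)]
  linarith

theorem Setting.exists_pos_of_le_sum (D : Setting n P Q) {y : Vec n}
    (hy : (n : ℝ) - D.s ≤ ∑ i, y i) : ∃ i, 0 < y i := by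
  have hs : (D.s : ℝ) < n := by exact_mod_cast D.hs
  by_contra! hle
  linarith [Finset.sum_nonpos fun i (_ : i ∈ univ) => hle i]

/-- Lemma 1a: at any T-stationary point of R the summation
inequality constraint is active. -/
theorem statement0 {n : ℕ} {P Q : Type*} [Fintype P] [Fintype Q]
    (D : Setting n P Q) (x y : Vec n) (hT : TStat D x y) :
    (∑ i, y i) = (n : ℝ) - D.s := by
  obtain ⟨M, hTM⟩ := hT
  obtain ⟨i, hyi⟩ := D.exists_pos_of_le_sum hTM.1.2.2.1
  have hmu3 : 0 < M.mu3 := (D.hcpos i).trans_le (hTM.c_le_mu3 hyi)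
  obtain ⟨-, -, -, -, hslack, -, -⟩ := hTM
  rw [mul_eq_zero, sub_eq_zero] at hslack
  exact hslack.resolve_left hmu3.ne'

end Scholtes
end
end

section
/- Let (x̄,ȳ) be a T-stationary point of the regularized continuous reformulation R. Then the index set a01(x̄,ȳ) consists of exactly n−s elements. -/
open scoped Classical
open Finset Filter Topology

noncomputable section
namespace Scholtes

variable {n : ℕ} {P Q : Type*} [Fintype P] [Fintype Q]

/- At most `k - 1` entries bounded by `1 + 1/k` sum to at most `(k - 1)(k + 1)/k < k`. -/
theorem le_card_of_le_sum_of_le_one_add_inv {ι : Type*} [Fintype ι] {S : Finset ι} {y : ι → ℝ}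
    {k : ℕ} (hk : 0 < k) (hy : ∀ i, y i ≤ 1 + 1 / k) (hS : ∀ i ∉ S, y i = 0)
    (hsum : (k : ℝ) ≤ ∑ i, y i) : k ≤ S.card := by
  have hkR : (0 : ℝ) < k := by exact_mod_cast hk
  have hsupp : ∑ i, y i = ∑ i ∈ S, y i :=
    (sum_subset (subset_univ S) fun i _ hi => hS i hi).symm
  have hbound : ∑ i ∈ S, y i ≤ S.card * (1 + 1 / k) := by
    rw [← nsmul_eq_mul]
    exact sum_le_card_nsmul S y _ fun i _ => hy i
  have hsq : (k : ℝ) * k ≤ S.card * (k + 1) :=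
    calc (k : ℝ) * k ≤ S.card * (1 + 1 / k) * k :=
          mul_le_mul_of_nonneg_right (hsum.trans (hsupp.trans_le hbound)) hkR.le
      _ = S.card * (k + 1) := by field_simp
  have hsqN : k * k ≤ S.card * (k + 1) := by exact_mod_cast hsq
  by_contra! hlt
  nlinarith

theorem Setting.cast_sub_s (D : Setting n P Q) : ((n - D.s : ℕ) : ℝ) = n - D.s :=
  Nat.cast_sub D.hs.le

theorem feasR.eq_zero_of_notMem_a01 {D : Setting n P Q} {x y : Vec n} (h : feasR D x y)
    {i : Fin n} (hi : i ∉ a01 x y) : y i = 0 := by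
  obtain ⟨-, -, -, hxy, hy⟩ := h
  by_contra hne
  have hpos : 0 < y i := (hy i).1.lt_of_ne' hne
  have hx : x i = 0 := (mul_eq_zero.mp (hxy i)).resolve_right hne
  exact hi (by simp [a01, hx, hpos])

theorem feasR.sub_le_card_a01 {D : Setting n P Q} {x y : Vec n} (h : feasR D x y) :
    n - D.s ≤ (a01 x y).card := by
  have hk : 0 < n - D.s := Nat.sub_pos_of_lt D.hs
  refine le_card_of_le_sum_of_le_one_add_inv hk (fun i => ?_) (fun i => h.eq_zero_of_notMem_a01)
    (by rw [D.cast_sub_s]; exact h.2.2.1)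
  rw [D.cast_sub_s]
  linarith [(h.2.2.2.2 i).2, D.hεle]

theorem TStatEq.c_eq_of_mem_a01 {D : Setting n P Q} {x y : Vec n} {M : TMult n P Q}
    (hM : TStatEq D x y M) {i : Fin n} (hi : i ∈ a01 x y) :
    D.c i = M.mu3 - if i ∈ Eact D y then M.mu2 i else 0 := by
  have hy : 0 < y i := (mem_filter.mp hi).2.2
  have hi10 : i ∉ a10 x y := by simp [a10, hy.ne']
  have hi00 : i ∉ a00 x y := by simp [a00, hy.ne']
  have hcomp := congrArg (fun z => z.2 i) hM
  simp only [Prod.snd_add, Prod.snd_sub, Prod.snd_sum, Prod.smul_snd, Pi.add_apply,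
    Pi.sub_apply, Finset.sum_apply, Pi.smul_apply, smul_eq_mul, ex, ey, eAll, smul_zero,
    Pi.zero_apply, mul_one, sum_const_zero, zero_add, Pi.single_apply, mul_ite, mul_zero,
    sum_ite_eq, if_neg hi10, if_neg hi00] at hcomp
  rw [hcomp]
  ring

/- On `a01 \ E` the stationarity equation forces `c i = μ₃`, and `c` is injective. -/
theorem TStatEq.card_a01_sdiff_Eact_le_one {D : Setting n P Q} {x y : Vec n}
    {M : TMult n P Q} (hM : TStatEq D x y M) : (a01 x y \ Eact D y).card ≤ 1 := by
  have hc : ∀ i ∈ a01 x y \ Eact D y, D.c i = M.mu3 := fun i hi => by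
    obtain ⟨hi01, hiE⟩ := mem_sdiff.mp hi
    simpa [hiE] using hM.c_eq_of_mem_a01 hi01
  exact card_le_one.mpr fun i hi j hj => D.hcinj ((hc i hi).trans (hc j hj).symm)

theorem TStatAt.mu3_eq_zero_of_lt_sum {D : Setting n P Q} {x y : Vec n} {M : TMult n P Q}
    (hM : TStatAt D x y M) (hlt : (n : ℝ) - D.s < ∑ i, y i) : M.mu3 = 0 :=
  (mul_eq_zero.mp hM.2.2.2.2.1).resolve_right (sub_ne_zero.mpr hlt.ne')

/- If `a01` had more than `n - s` elements, at least `n - s` of them would lie in `E`,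
making the cardinality constraint inactive; then `μ₃ = 0` and `c i = -μ₂ i ≤ 0` on `E`. -/
theorem TStatAt.card_a01_le_sub {D : Setting n P Q} {x y : Vec n} {M : TMult n P Q}
    (hM : TStatAt D x y M) : (a01 x y).card ≤ n - D.s := by
  have hy := hM.1.2.2.2.2
  have hEq := hM.2.2.2.2.2.2
  by_contra! hgt
  have hB : n - D.s ≤ (a01 x y ∩ Eact D y).card := by
    have := card_sdiff_add_card_inter (a01 x y) (Eact D y)
    have := hEq.card_a01_sdiff_Eact_le_one
    omega
  have hBsum : ((a01 x y ∩ Eact D y).card : ℝ) * (1 + D.ε) ≤ ∑ i, y i := by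
    refine le_trans ?_ (sum_le_univ_sum_of_nonneg (s := a01 x y ∩ Eact D y) fun i => (hy i).1)
    rw [← nsmul_eq_mul]
    exact card_nsmul_le_sum _ y _ fun i hi => (mem_filter.mp (mem_inter.mp hi).2).2.ge
  have hk : (0 : ℝ) < (n - D.s : ℕ) := by exact_mod_cast Nat.sub_pos_of_lt D.hs
  have hBR : ((n - D.s : ℕ) : ℝ) ≤ (a01 x y ∩ Eact D y).card := by exact_mod_cast hB
  have hmu3 := hM.mu3_eq_zero_of_lt_sum (by
    rw [← D.cast_sub_s]
    nlinarith [D.hεpos])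
  obtain ⟨i, hi⟩ : (a01 x y ∩ Eact D y).Nonempty := card_pos.mp (by have := D.hs; omega)
  obtain ⟨hi01, hiE⟩ := mem_inter.mp hi
  have hc := hEq.c_eq_of_mem_a01 hi01
  rw [if_pos hiE, hmu3] at hc
  linarith [hM.2.2.1 i hiE, D.hcpos i]

/-- Lemma 1b: at any T-stationary point of R the index set a01
consists of exactly n − s elements. -/
theorem statement2 {n : ℕ} {P Q : Type*} [Fintype P] [Fintype Q]
    (D : Setting n P Q) (x y : Vec n) (hT : TStat D x y) :
    (a01 x y).card = n - D.s := by
  obtain ⟨M, hM⟩ := hT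
  exact le_antisymm hM.card_a01_le_sub hM.1.sub_le_card_a01

end Scholtes
end
end

section
/- Let (x̄,ȳ) be a T-stationary point of the regularized continuous reformulation R. Then exactly n−s−1 components of ȳ are equal to 1+ε, exactly one component of ȳ is equal to 1−(n−s−1)ε, and the remaining s components of ȳ vanish. -/
open scoped Classical
open Finset Filter Topology

noncomputable section
namespace Scholtes

variable {n : ℕ} {P Q : Type*} [Fintype P] [Fintype Q]

/-! The `y`-part of the T-stationarity equation reads `c i = μ₃ - μ₂ᵢ` on `E(ȳ)` and
`c i = μ₃` wherever `0 < ȳᵢ < 1 + ε`. As the `c i` are positive and `μ₂ ≥ 0`, `μ₃ > 0`, so the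
cardinality constraint is active: `∑ ȳᵢ = n - s`. As the `c i` are pairwise different, at most
one component lies strictly between `0` and `1 + ε`; calling `t` the sum of such components,
`k (1 + ε) + t = n - s` with `k = |E(ȳ)|` and `0 ≤ t < 1 + ε`, and `(n - s) ε ≤ 1` leaves only
`k = n - s - 1`, `t = 1 - (n - s - 1) ε > 0`. -/

section Counting

variable {ι : Type*}

theorem card_eq_one_of_sum_ne_zero {s : Finset ι} {f : ι → ℝ} (hs : #s ≤ 1)
    (h0 : ∑ i ∈ s, f i ≠ 0) : #s = 1 :=
  le_antisymm hs (card_pos.mpr (nonempty_of_sum_ne_zero h0))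

theorem sum_lt_of_card_le_one {s : Finset ι} {f : ι → ℝ} {b : ℝ} (hb : 0 < b)
    (hs : #s ≤ 1) (hf : ∀ i ∈ s, f i < b) : ∑ i ∈ s, f i < b := by
  rcases s.eq_empty_or_nonempty with rfl | hne
  · simpa using hb
  · obtain ⟨i, rfl⟩ := card_eq_one.mp (le_antisymm hs (card_pos.mpr hne))
    simpa using hf i (mem_singleton_self i)

variable [Fintype ι]

theorem sum_eq_card_filter_eq_mul_add_sum (y : ι → ℝ) (a : ℝ) :
    ∑ i, y i = #{i | y i = a} * a + ∑ i with y i ≠ 0 ∧ y i ≠ a, y i := by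
  rw [← sum_filter_add_sum_filter_not univ (fun i => y i = a),
    sum_congr rfl fun i hi => (mem_filter.mp hi).2, sum_const, nsmul_eq_mul,
    ← sum_filter_ne_zero, filter_filter]
  simp only [and_comm]

theorem card_filter_eq_zero_add_card_filter_eq_add_card {y : ι → ℝ} {a : ℝ} (ha : a ≠ 0) :
    #{i | y i = 0} + #{i | y i = a} + #{i | y i ≠ 0 ∧ y i ≠ a} = Fintype.card ι := by
  rw [← card_univ, ← card_filter_add_card_filter_not (s := univ) (fun i => y i = a),
    ← card_filter_add_card_filter_not (s := univ.filter fun i => ¬y i = a) (fun i => y i = 0),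
    filter_filter, filter_filter]
  have hzero : (univ.filter fun i => y i ≠ a ∧ y i = 0) = univ.filter fun i => y i = 0 := by
    ext i
    simp only [mem_filter, mem_univ, true_and, and_iff_right_iff_imp]
    rintro h rfl
    exact ha h
  rw [hzero]
  simp only [ne_eq, and_comm]
  omega

theorem filter_eq_sum_eq_filter_ne {y : ι → ℝ} {a : ℝ} (hI : #{i | y i ≠ 0 ∧ y i ≠ a} ≤ 1)
    (h0 : ∑ i with y i ≠ 0 ∧ y i ≠ a, y i ≠ 0) :
    univ.filter (fun i => y i = ∑ i with y i ≠ 0 ∧ y i ≠ a, y i) =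
      univ.filter fun i => y i ≠ 0 ∧ y i ≠ a := by
  obtain ⟨j, hj⟩ := card_eq_one.mp (card_eq_one_of_sum_ne_zero hI h0)
  have hyj : y j ≠ 0 ∧ y j ≠ a := by
    simpa using (hj ▸ mem_singleton_self j : j ∈ univ.filter fun i => y i ≠ 0 ∧ y i ≠ a)
  rw [hj, sum_singleton]
  ext i
  constructor
  · intro hi
    rw [← hj]
    simpa [(mem_filter.mp hi).2] using hyj
  · intro hi
    rw [mem_singleton.mp hi]
    simp

end Counting

theorem eq_of_natCast_mul_add_eq {k r : ℕ} {ε t : ℝ} (hr : 1 ≤ r) (hε : 0 < ε)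
    (hεr : r * ε ≤ 1) (ht₀ : 0 ≤ t) (ht : t < 1 + ε) (h : k * (1 + ε) + t = r) :
    k + 1 = r ∧ t = 1 - (r - 1) * ε := by
  have hr' : (1 : ℝ) ≤ r := by exact_mod_cast hr
  have hk_lt : k < r := by
    by_contra! hrk
    have : (r : ℝ) ≤ k := by exact_mod_cast hrk
    nlinarith
  have hk_ge : r ≤ k + 1 := by
    by_contra! hkr
    have : (k : ℝ) + 2 ≤ r := by exact_mod_cast hkr
    nlinarith
  have hkr : k + 1 = r := by omega
  refine ⟨hkr, ?_⟩
  have hk : (k : ℝ) = r - 1 := by rw [← hkr]; push_cast; ring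
  rw [hk] at h
  linarith

section TStationary

variable {n : ℕ} {P Q : Type*} [Fintype P] [Fintype Q]
  {D : Setting n P Q} {x y : Vec n} {M : TMult n P Q}

theorem TStatEq.c_eq (hEq : TStatEq D x y M) (i : Fin n) :
    D.c i = M.mu3 - (if i ∈ Eact D y then M.mu2 i else 0)
      + (if i ∈ a10 x y then M.sig2 i else 0)
      + (if i ∈ a00 x y then M.rho2 i else 0) := by
  have h2 := congrFun (congrArg Prod.snd hEq) i
  simp only [Prod.snd_sum, Prod.snd_add, Prod.snd_sub, Prod.smul_snd, ex, ey, eAll,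
    smul_zero, sum_const_zero, Finset.sum_apply, Pi.add_apply, Pi.sub_apply,
    Pi.smul_apply, Pi.single_apply, smul_eq_mul, mul_ite, mul_one, mul_zero,
    sum_ite_eq, zero_add, add_zero, Pi.zero_apply] at h2
  rw [h2]
  ring

theorem TStatEq.c_eq_of_ne_zero (hEq : TStatEq D x y M) {i : Fin n} (hy : y i ≠ 0) :
    D.c i = M.mu3 - if i ∈ Eact D y then M.mu2 i else 0 := by
  have h10 : i ∉ a10 x y := by simp [a10, hy]
  have h00 : i ∉ a00 x y := by simp [a00, hy]
  rw [hEq.c_eq i, if_neg h10, if_neg h00]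
  ring

namespace TStatAt

theorem c_le_mu3_s3 (hT : TStatAt D x y M) {i : Fin n} (hy : y i ≠ 0) : D.c i ≤ M.mu3 := by
  obtain ⟨-, -, hmu2, -, -, -, hEq⟩ := hT
  rw [hEq.c_eq_of_ne_zero hy]
  split_ifs with hE
  · linarith [hmu2 i hE]
  · simp

theorem c_eq_mu3 (hT : TStatAt D x y M) {i : Fin n} (hy : y i ≠ 0) (hyE : y i ≠ 1 + D.ε) :
    D.c i = M.mu3 := by
  obtain ⟨-, -, -, -, -, -, hEq⟩ := hT
  have hE : i ∉ Eact D y := by simpa [Eact] using hyE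
  simpa [hE] using hEq.c_eq_of_ne_zero hy

theorem card_filter_interior_le_one (hT : TStatAt D x y M) :
    #{i | y i ≠ 0 ∧ y i ≠ 1 + D.ε} ≤ 1 :=
  card_le_one.mpr fun _ hi _ hj => by
    simp only [mem_filter, mem_univ, true_and] at hi hj
    exact D.hcinj ((hT.c_eq_mu3 hi.1 hi.2).trans (hT.c_eq_mu3 hj.1 hj.2).symm)

theorem mu3_pos (hT : TStatAt D x y M) : 0 < M.mu3 := by
  obtain ⟨i, hi⟩ : ∃ i, y i ≠ 0 := by
    by_contra! hy
    obtain ⟨-, -, hsum, -, -⟩ := hT.1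
    have hs : (D.s : ℝ) + 1 ≤ n := by exact_mod_cast D.hs
    simp only [hy, sum_const_zero] at hsum
    linarith
  exact (D.hcpos i).trans_le (hT.c_le_mu3_s3 hi)

theorem sum_eq (hT : TStatAt D x y M) : ∑ i, y i = (n : ℝ) - D.s := by
  have hcompl := hT.2.2.2.2.1
  rwa [mul_eq_zero, or_iff_right hT.mu3_pos.ne', sub_eq_zero] at hcompl

end TStatAt

end TStationary

/-- Lemma 1c: at any T-stationary point of R exactly n−s−1
components of ȳ equal 1+ε, exactly one equals 1−(n−s−1)ε, and the remaining
s components vanish. -/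
theorem statement3 {n : ℕ} {P Q : Type*} [Fintype P] [Fintype Q]
    (D : Setting n P Q) (x y : Vec n) (hT : TStat D x y) :
    (Finset.univ.filter fun i => y i = 1 + D.ε).card = n - D.s - 1 ∧
    (Finset.univ.filter fun i => y i = 1 - ((n : ℝ) - D.s - 1) * D.ε).card = 1 ∧
    (Finset.univ.filter fun i => y i = 0).card = D.s := by
  obtain ⟨M, hT⟩ := hT
  obtain ⟨-, -, -, -, hbox⟩ := hT.1
  set I := univ.filter fun i => y i ≠ 0 ∧ y i ≠ 1 + D.ε with hI
  have hr : ((n - D.s : ℕ) : ℝ) = (n : ℝ) - D.s := Nat.cast_sub D.hs.le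
  have hεr : ((n - D.s : ℕ) : ℝ) * D.ε ≤ 1 := by
    rw [hr, mul_comm, ← le_div_iff₀ (by rw [← hr]; exact_mod_cast Nat.sub_pos_of_lt D.hs)]
    exact D.hεle
  have hsum : (#{i | y i = 1 + D.ε} : ℝ) * (1 + D.ε) + ∑ i ∈ I, y i = (n - D.s : ℕ) := by
    rw [hr, ← hT.sum_eq, sum_eq_card_filter_eq_mul_add_sum]
  have hI_nonneg : 0 ≤ ∑ i ∈ I, y i := sum_nonneg fun i _ => (hbox i).1
  have hI_lt : ∑ i ∈ I, y i < 1 + D.ε :=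
    sum_lt_of_card_le_one (by linarith [D.hεpos]) hT.card_filter_interior_le_one
      fun i hi => lt_of_le_of_ne (hbox i).2 (mem_filter.mp hi).2.2
  obtain ⟨hk, hv⟩ :=
    eq_of_natCast_mul_add_eq (Nat.sub_pos_of_lt D.hs) D.hεpos hεr hI_nonneg hI_lt hsum
  have hI_ne : ∑ i ∈ I, y i ≠ 0 := by
    rw [hv]
    nlinarith [D.hεpos]
  have hI_card := card_eq_one_of_sum_ne_zero hT.card_filter_interior_le_one hI_ne
  have hval := filter_eq_sum_eq_filter_ne hT.card_filter_interior_le_one hI_ne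
  rw [hv, hr] at hval
  have hpart := card_filter_eq_zero_add_card_filter_eq_add_card (y := y)
    (by linarith [D.hεpos] : 1 + D.ε ≠ 0)
  rw [Fintype.card_fin, ← hI, hI_card] at hpart
  exact ⟨by omega, by rw [hval, hI_card], by omega⟩

end Scholtes
end
end

section
/- Let (x̄,ȳ) be a feasible point of the regularized continuous reformulation R at which MPOC-LICQ holds. Then there exist t̄ > 0 and δ > 0 such that for every t ∈ (0, t̄) and every feasible point (x,y) of the Scholtes-type regularization S(t) with ‖(x,y)−(x̄,ȳ)‖ < δ, LICQ holds at (x,y). -/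
/-!
MPOC-LICQ says that a linear map `Φ`, sending admissible multiplier tuples to the corresponding
combination of constraint gradients at `(x̄, ȳ)`, is injective. Perturb `Φ` to `Φ_z` for
`z = (u, v)` near `(x̄, ȳ)`: evaluate the gradients at `u`, and replace `(e_i, 0)`, `i ∈ a01`,
and `(0, e_i)`, `i ∈ a10`, by `v_i⁻¹ (v_i e_i, u_i e_i)` and `u_i⁻¹ (v_i e_i, u_i e_i)`.
Then `Φ_z` depends continuously on `z`, and injective linear maps on a finite-dimensional space
form an open set, so `Φ_z` stays injective near `(x̄, ȳ)`. There the active index sets can only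
shrink, and for `t ≠ 0` both `u_i` and `v_i` are nonzero on `H(u, v)`; hence every LICQ
combination of `S(t)` at `(u, v)` is `Φ_z` of a tuple that vanishes only if all its multipliers
do. In particular `δ` does not depend on `t`.
-/

open scoped Classical
open Finset Filter Topology

noncomputable section
namespace Scholtes

variable {n : ℕ} {P Q : Type*} [Fintype P] [Fintype Q]

theorem _root_.LinearMap.eventually_injective_of_continuousAt {𝕜 X E F : Type*}
    [NontriviallyNormedField 𝕜] [CompleteSpace 𝕜] [TopologicalSpace X]
    [NormedAddCommGroup E] [NormedSpace 𝕜 E] [FiniteDimensional 𝕜 E]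
    [NormedAddCommGroup F] [NormedSpace 𝕜 F] {Φ : X → E →ₗ[𝕜] F} {z₀ : X}
    (hΦ : ∀ a, ContinuousAt (fun z => Φ z a) z₀) (h : Function.Injective (Φ z₀)) :
    ∀ᶠ z in 𝓝 z₀, Function.Injective (Φ z) := by
  have hΨ : ContinuousAt (fun z => LinearMap.toContinuousLinearMap (Φ z)) z₀ :=
    continuousAt_clm_apply.2 hΦ
  exact hΨ.eventually_mem (ContinuousLinearMap.isOpen_injective.mem_nhds h)

theorem _root_.ContinuousAt.eventually_eq_imp {X Y : Type*} [TopologicalSpace X]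
    [TopologicalSpace Y] [T1Space Y] {f : X → Y} {z₀ : X} (hf : ContinuousAt f z₀) (c : Y) :
    ∀ᶠ z in 𝓝 z₀, f z = c → f z₀ = c := by
  by_cases h : f z₀ = c
  · exact .of_forall fun _ _ => h
  · filter_upwards [hf.eventually_ne h] with z hz h' using absurd h' hz

theorem continuous_grad {f : Vec n → ℝ} {k : WithTop ℕ∞} (hf : ContDiff ℝ k f)
    (hk : k ≠ 0) : Continuous (grad f) :=
  continuous_pi fun _ => (hf.continuous_fderiv hk).clm_apply continuous_const

theorem hvec_eq (x y : Vec n) (i : Fin n) : hvec x y i = y i • ex i + x i • ey i := by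
  simp only [hvec, ex, ey, Prod.smul_mk, Prod.mk_add_mk, smul_zero, add_zero, zero_add,
    ← Pi.single_smul, smul_eq_mul, mul_one]

theorem a01_union_a00 {x y : Vec n} (hy : ∀ i, 0 ≤ y i) :
    a01 x y ∪ a00 x y = univ.filter fun i => x i = 0 := by
  ext i
  simp only [mem_union, a01, a00, mem_filter, mem_univ, true_and, ← and_or_left]
  exact and_iff_left ((hy i).lt_or_eq.imp_right Eq.symm)

theorem a10_union_a00 (x y : Vec n) : a10 x y ∪ a00 x y = univ.filter fun i => y i = 0 := by
  ext i
  simp only [mem_union, a10, a00, mem_filter, mem_univ, true_and]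
  tauto

/-- Multiplier tuples `(lam, mu1, mu2, mu3, s1, s2)`, ordered as in `MPOC_LICQ`. -/
abbrev Coef (n : ℕ) (P Q : Type*) : Type _ :=
  (P → ℝ) × (Q → ℝ) × (Fin n → ℝ) × ℝ × (Fin n → ℝ) × (Fin n → ℝ)

def admissible (D : Setting n P Q) (x y : Vec n) : Submodule ℝ (Coef n P Q) where
  carrier := {a | (∀ q ∉ Q0 D x, a.2.1 q = 0) ∧ (∀ i ∉ Eact D y, a.2.2.1 i = 0) ∧
    ((∑ i, y i) ≠ (n : ℝ) - D.s → a.2.2.2.1 = 0) ∧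
    (∀ i ∉ a01 x y ∪ a00 x y, a.2.2.2.2.1 i = 0) ∧
    (∀ i ∉ a10 x y ∪ a00 x y, a.2.2.2.2.2 i = 0)}
  add_mem' := by
    rintro a b ⟨ha₁, ha₂, ha₃, ha₄, ha₅⟩ ⟨hb₁, hb₂, hb₃, hb₄, hb₅⟩
    refine ⟨fun q hq => ?_, fun i hi => ?_, fun h => ?_, fun i hi => ?_, fun i hi => ?_⟩ <;>
      simp_all
  zero_mem' := ⟨fun _ _ => rfl, fun _ _ => rfl, fun _ => rfl, fun _ _ => rfl, fun _ _ => rfl⟩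
  smul_mem' := by
    rintro c a ⟨ha₁, ha₂, ha₃, ha₄, ha₅⟩
    refine ⟨fun q hq => ?_, fun i hi => ?_, fun h => ?_, fun i hi => ?_, fun i hi => ?_⟩ <;>
      simp_all

def pertEx (y : Vec n) (z : Vec n × Vec n) (i : Fin n) : Vec n × Vec n :=
  if y i = 0 then ex i else (z.2 i)⁻¹ • hvec z.1 z.2 i

def pertEy (x : Vec n) (z : Vec n × Vec n) (i : Fin n) : Vec n × Vec n :=
  if x i = 0 then ey i else (z.1 i)⁻¹ • hvec z.1 z.2 i

/-- The perturbed MPOC-LICQ map `Φ_z`. -/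
def mpocMap (D : Setting n P Q) (x y : Vec n) (z : Vec n × Vec n) :
    Coef n P Q →ₗ[ℝ] Vec n × Vec n where
  toFun a := (∑ p, a.1 p • ((grad (D.h p) z.1, (0 : Vec n)) : Vec n × Vec n))
    + (∑ q ∈ Q0 D x, a.2.1 q • ((grad (D.g q) z.1, (0 : Vec n)) : Vec n × Vec n))
    + (∑ i ∈ Eact D y, a.2.2.1 i • ey i)
    + a.2.2.2.1 • eAll
    + (∑ i ∈ a01 x y ∪ a00 x y, a.2.2.2.2.1 i • pertEx y z i)
    + (∑ i ∈ a10 x y ∪ a00 x y, a.2.2.2.2.2 i • pertEy x z i)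
  map_add' a b := by
    simp only [Prod.fst_add, Prod.snd_add, Pi.add_apply, add_smul, sum_add_distrib]
    abel
  map_smul' c a := by
    simp only [Prod.smul_fst, Prod.smul_snd, Pi.smul_apply, smul_eq_mul, mul_smul,
      RingHom.id_apply, smul_add, smul_sum]

theorem pertEx_self {x y : Vec n} {i : Fin n} (hx : x i = 0) : pertEx y (x, y) i = ex i := by
  by_cases hy : y i = 0
  · simp [pertEx, hy]
  · simp [pertEx, hy, hvec_eq, hx, smul_smul]

theorem pertEy_self {x y : Vec n} {i : Fin n} (hy : y i = 0) : pertEy x (x, y) i = ey i := by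
  by_cases hx : x i = 0
  · simp [pertEy, hx]
  · simp [pertEy, hx, hvec_eq, hy, smul_smul]

theorem eq_zero_of_mpocMap_self_eq_zero {D : Setting n P Q} {x y : Vec n} (hlicq : MPOC_LICQ D x y)
    {a : Coef n P Q} (ha : a ∈ admissible D x y) (h : mpocMap D x y (x, y) a = 0) : a = 0 := by
  obtain ⟨lam, mu1, mu2, mu3, s1, s2⟩ := a
  obtain ⟨h₁, h₂, h₃, h₄, h₅⟩ := ha
  have hx : ∀ i ∈ a01 x y ∪ a00 x y, x i = 0 := by
    intro i hi
    simp only [mem_union, a01, a00, mem_filter, mem_univ, true_and] at hi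
    tauto
  have hy : ∀ i ∈ a10 x y ∪ a00 x y, y i = 0 := by
    intro i hi
    simp only [mem_union, a10, a00, mem_filter, mem_univ, true_and] at hi
    tauto
  have hex : ∑ i ∈ a01 x y ∪ a00 x y, s1 i • pertEx y (x, y) i
      = ∑ i ∈ a01 x y ∪ a00 x y, s1 i • ex i :=
    sum_congr rfl fun i hi => by rw [pertEx_self (hx i hi)]
  have hey : ∑ i ∈ a10 x y ∪ a00 x y, s2 i • pertEy x (x, y) i
      = ∑ i ∈ a10 x y ∪ a00 x y, s2 i • ey i :=
    sum_congr rfl fun i hi => by rw [pertEy_self (hy i hi)]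
  simp only [mpocMap, LinearMap.coe_mk, AddHom.coe_mk, hex, hey] at h
  obtain ⟨c₁, c₂, c₃, c₄, c₅, c₆⟩ := hlicq lam mu1 mu2 mu3 s1 s2 h₃ h
  simp only [Prod.mk_eq_zero]
  refine ⟨funext c₁, funext fun q => ?_, funext fun i => ?_, c₄, funext fun i => ?_,
    funext fun i => ?_⟩
  exacts [(em _).elim (c₂ q) (h₁ q), (em _).elim (c₃ i) (h₂ i),
    (em _).elim (c₅ i) (h₄ i), (em _).elim (c₆ i) (h₅ i)]

theorem continuous_hvec (i : Fin n) :
    Continuous fun z : Vec n × Vec n => hvec z.1 z.2 i := by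
  simp only [hvec_eq]
  fun_prop

theorem continuousAt_pertEx (x y : Vec n) (i : Fin n) :
    ContinuousAt (fun z => pertEx y z i) (x, y) := by
  by_cases hy : y i = 0
  · simp only [pertEx, hy, if_true]
    exact continuousAt_const
  · simp only [pertEx, hy, if_false]
    have hv : ContinuousAt (fun z : Vec n × Vec n => z.2 i) (x, y) := by fun_prop
    exact (hv.inv₀ hy).smul (continuous_hvec i).continuousAt

theorem continuousAt_pertEy (x y : Vec n) (i : Fin n) :
    ContinuousAt (fun z => pertEy x z i) (x, y) := by
  by_cases hx : x i = 0
  · simp only [pertEy, hx, if_true]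
    exact continuousAt_const
  · simp only [pertEy, hx, if_false]
    have hu : ContinuousAt (fun z : Vec n × Vec n => z.1 i) (x, y) := by fun_prop
    exact (hu.inv₀ hx).smul (continuous_hvec i).continuousAt

theorem continuousAt_mpocMap_apply (D : Setting n P Q) (x y : Vec n) (a : Coef n P Q) :
    ContinuousAt (fun z => mpocMap D x y z a) (x, y) := by
  have hh := fun p => continuous_grad (D.hh p) (by norm_num)
  have hg := fun q => continuous_grad (D.hg q) (by norm_num)
  have hex := continuousAt_pertEx x y
  have hey := continuousAt_pertEy x y
  simp only [mpocMap, LinearMap.coe_mk, AddHom.coe_mk]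
  fun_prop

theorem eventually_eq_zero_of_mpocMap_eq_zero {D : Setting n P Q} {x y : Vec n}
    (hlicq : MPOC_LICQ D x y) :
    ∀ᶠ z in 𝓝 (x, y), ∀ a ∈ admissible D x y, mpocMap D x y z a = 0 → a = 0 := by
  have h := LinearMap.eventually_injective_of_continuousAt
    (Φ := fun z => (mpocMap D x y z).comp (admissible D x y).subtype)
    (fun a => continuousAt_mpocMap_apply D x y a)
    ((injective_iff_map_eq_zero _).2 fun a ha =>
      Subtype.ext (eq_zero_of_mpocMap_self_eq_zero hlicq a.2 ha))
  filter_upwards [h] with z hz a ha h0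
  exact congrArg Subtype.val ((injective_iff_map_eq_zero _).1 hz ⟨a, ha⟩ h0)

structure ActiveSubset (D : Setting n P Q) (x y u v : Vec n) : Prop where
  g_eq_zero : ∀ q, D.g q u = 0 → D.g q x = 0
  eq_upper : ∀ i, v i = 1 + D.ε → y i = 1 + D.ε
  fst_eq_zero : ∀ i, u i = 0 → x i = 0
  snd_eq_zero : ∀ i, v i = 0 → y i = 0
  sum_eq : ∑ i, v i = (n : ℝ) - D.s → ∑ i, y i = (n : ℝ) - D.s

theorem eventually_activeSubset (D : Setting n P Q) (x y : Vec n) :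
    ∀ᶠ z : Vec n × Vec n in 𝓝 (x, y), ActiveSubset D x y z.1 z.2 := by
  have heq : ∀ f : Vec n × Vec n → ℝ, Continuous f → ∀ c,
      ∀ᶠ z in 𝓝 (x, y), f z = c → f (x, y) = c :=
    fun f hf c => hf.continuousAt.eventually_eq_imp c
  filter_upwards [eventually_all.2 fun q =>
      heq (fun z => D.g q z.1) ((D.hg q).continuous.comp continuous_fst) 0,
    eventually_all.2 fun i => heq (fun z => z.2 i) (by fun_prop) (1 + D.ε),
    eventually_all.2 fun i => heq (fun z => z.1 i) (by fun_prop) 0,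
    eventually_all.2 fun i => heq (fun z => z.2 i) (by fun_prop) 0,
    heq (fun z => ∑ i, z.2 i) (by fun_prop) ((n : ℝ) - D.s)] with z h₁ h₂ h₃ h₄ h₅
  exact ⟨h₁, h₂, h₃, h₄, h₅⟩

theorem mul_ne_zero_of_mem_Hact {t : ℝ} {u v : Vec n} {i : Fin n} (ht : t ≠ 0)
    (hi : i ∈ Hact t u v) : u i * v i ≠ 0 := by
  simp only [Hact, Hge, Hle, mem_union, mem_filter, mem_univ, true_and] at hi
  rcases hi with h | h <;> rw [h] <;> simpa using ht

/-- `eta i • hvec u v i` is `(eta i * v i) • pertEx y (u, v) i` if `i ∈ a01`,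
`(eta i * u i) • pertEy x (u, v) i` if `i ∈ a10`, and
`(eta i * v i) • ex i + (eta i * u i) • ey i` if `i ∈ a00`. -/
def licqCoef (D : Setting n P Q) (t : ℝ) (x y u v : Vec n) (lam : P → ℝ) (mu1 : Q → ℝ)
    (mu2 : Fin n → ℝ) (mu3 : ℝ) (eta nu : Fin n → ℝ) : Coef n P Q :=
  (lam, fun q => if q ∈ Q0 D u then mu1 q else 0, fun i => if i ∈ Eact D v then mu2 i else 0,
    mu3, fun i => if i ∈ Hact t u v ∧ x i = 0 then eta i * v i else 0,
    fun i => (if i ∈ Hact t u v ∧ y i = 0 then eta i * u i else 0) +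
      if i ∈ Nact v then nu i else 0)

theorem mpocMap_licqCoef {D : Setting n P Q} {t : ℝ} {x y u v : Vec n} (ht : t ≠ 0)
    (hy : ∀ i, 0 ≤ y i) (hxy : ∀ i, x i * y i = 0) (hact : ActiveSubset D x y u v)
    (lam : P → ℝ) (mu1 : Q → ℝ) (mu2 : Fin n → ℝ) (mu3 : ℝ) (eta nu : Fin n → ℝ) :
    mpocMap D x y (u, v) (licqCoef D t x y u v lam mu1 mu2 mu3 eta nu) =
      (∑ p, lam p • ((grad (D.h p) u, (0 : Vec n)) : Vec n × Vec n))
      + (∑ q ∈ Q0 D u, mu1 q • ((grad (D.g q) u, (0 : Vec n)) : Vec n × Vec n))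
      + (∑ i ∈ Eact D v, mu2 i • ey i)
      + mu3 • eAll
      + (∑ i ∈ Hact t u v, eta i • hvec u v i)
      + (∑ i ∈ Nact v, nu i • ey i) := by
  have hQ : Q0 D u ⊆ Q0 D x := fun q => by simpa [Q0] using hact.g_eq_zero q
  have hE : Eact D v ⊆ Eact D y := fun i => by simpa [Eact] using hact.eq_upper i
  have hcoord : ∀ i, (if x i = 0 then
        (if i ∈ Hact t u v ∧ x i = 0 then eta i * v i else 0) • pertEx y (u, v) i else 0) +
      (if y i = 0 then ((if i ∈ Hact t u v ∧ y i = 0 then eta i * u i else 0) +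
        if i ∈ Nact v then nu i else 0) • pertEy x (u, v) i else 0) =
      (if i ∈ Hact t u v then eta i • hvec u v i else 0) +
        if i ∈ Nact v then nu i • ey i else 0 := by
    intro i
    by_cases hH : i ∈ Hact t u v
    · have huv := mul_ne_zero_of_mem_Hact ht hH
      have hN : i ∉ Nact v := by simp [Nact, right_ne_zero_of_mul huv]
      have hu := left_ne_zero_of_mul huv
      have hv := right_ne_zero_of_mul huv
      by_cases hx : x i = 0 <;> by_cases hy0 : y i = 0
      · simp [hH, hN, hx, hy0, pertEx, pertEy, hvec_eq, mul_smul]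
      · simp [hH, hN, hx, hy0, pertEx, smul_smul, hv]
      · simp [hH, hN, hx, hy0, pertEy, smul_smul, hu]
      · exact absurd (hxy i) (mul_ne_zero hx hy0)
    · by_cases hN : i ∈ Nact v
      · have hv : v i = 0 := by simpa [Nact] using hN
        by_cases hx : x i = 0
        · simp [hH, hN, hx, hact.snd_eq_zero i hv, pertEy]
        · have hu : u i ≠ 0 := fun h => hx (hact.fst_eq_zero i h)
          simp [hH, hN, hx, hact.snd_eq_zero i hv, pertEy, hvec_eq, hv, smul_smul, hu]
      · simp [hH, hN]
  have hQsum : ∑ q ∈ Q0 D x, (if q ∈ Q0 D u then mu1 q else 0) •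
      ((grad (D.g q) u, (0 : Vec n)) : Vec n × Vec n) =
      ∑ q ∈ Q0 D u, mu1 q • ((grad (D.g q) u, (0 : Vec n)) : Vec n × Vec n) := by
    simp only [ite_smul, zero_smul, sum_ite_mem, inter_eq_right.2 hQ]
  have hEsum : ∑ i ∈ Eact D y, (if i ∈ Eact D v then mu2 i else 0) • ey i =
      ∑ i ∈ Eact D v, mu2 i • ey i := by
    simp only [ite_smul, zero_smul, sum_ite_mem, inter_eq_right.2 hE]
  simp only [mpocMap, licqCoef, LinearMap.coe_mk, AddHom.coe_mk]
  rw [hQsum, hEsum, add_assoc, a01_union_a00 hy, a10_union_a00, sum_filter, sum_filter,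
    ← sum_ite_mem_eq (Hact t u v), ← sum_ite_mem_eq (Nact v), ← sum_add_distrib,
    sum_congr rfl fun i _ => hcoord i, sum_add_distrib, ← add_assoc]

theorem licqCoef_mem_admissible {D : Setting n P Q} {t : ℝ} {x y u v : Vec n}
    (hy : ∀ i, 0 ≤ y i) (hact : ActiveSubset D x y u v) (lam : P → ℝ) (mu1 : Q → ℝ)
    (mu2 : Fin n → ℝ) {mu3 : ℝ} (eta nu : Fin n → ℝ)
    (hmu3 : ∑ i, v i ≠ (n : ℝ) - D.s → mu3 = 0) :
    licqCoef D t x y u v lam mu1 mu2 mu3 eta nu ∈ admissible D x y := by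
  refine ⟨fun q hq => if_neg ?_, fun i hi => if_neg ?_, fun hne => hmu3 (mt hact.sum_eq hne),
    fun i hi => if_neg ?_, fun i hi => ?_⟩
  · simpa [Q0] using mt (hact.g_eq_zero q) (by simpa [Q0] using hq)
  · simpa [Eact] using mt (hact.eq_upper i) (by simpa [Eact] using hi)
  · rw [a01_union_a00 hy, mem_filter, not_and] at hi
    exact fun h => hi (mem_univ i) h.2
  · rw [a10_union_a00, mem_filter, not_and] at hi
    have hy0 : y i ≠ 0 := hi (mem_univ i)
    simp [licqCoef, Nact, hy0, mt (hact.snd_eq_zero i) hy0]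

theorem licq_of_eq_zero_of_mpocMap_eq_zero {D : Setting n P Q} {t : ℝ} {x y u v : Vec n}
    (ht : t ≠ 0) (hy : ∀ i, 0 ≤ y i) (hxy : ∀ i, x i * y i = 0)
    (hact : ActiveSubset D x y u v)
    (hinj : ∀ a ∈ admissible D x y, mpocMap D x y (u, v) a = 0 → a = 0) : LICQ D t u v := by
  intro lam mu1 mu2 mu3 eta nu hmu3 hcomb
  have h0 := hinj _ (licqCoef_mem_admissible hy hact lam mu1 mu2 eta nu hmu3)
    ((mpocMap_licqCoef ht hy hxy hact lam mu1 mu2 mu3 eta nu).trans hcomb)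
  simp only [licqCoef, Prod.mk_eq_zero, funext_iff, Pi.zero_apply] at h0
  obtain ⟨hlam, hmu1, hmu2, hmu3, hs1, hs2⟩ := h0
  refine ⟨hlam, fun q hq => by simpa [hq] using hmu1 q, fun i hi => by simpa [hi] using hmu2 i,
    hmu3, fun i hi => ?_, fun i hi => ?_⟩
  · have huv := mul_ne_zero_of_mem_Hact ht hi
    have hN : i ∉ Nact v := by simp [Nact, right_ne_zero_of_mul huv]
    by_cases hx : x i = 0
    · simpa [hi, hx, right_ne_zero_of_mul huv] using hs1 i
    · have hy0 : y i = 0 := (mul_eq_zero.1 (hxy i)).resolve_left hx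
      simpa [hi, hy0, hN, left_ne_zero_of_mul huv] using hs2 i
  · have hv : v i = 0 := by simpa [Nact] using hi
    have hH : i ∉ Hact t u v := fun h => right_ne_zero_of_mul (mul_ne_zero_of_mem_Hact ht h) hv
    simpa [hi, hH] using hs2 i

theorem eventually_licq (D : Setting n P Q) {x y : Vec n} (hfeas : feasR D x y)
    (hlicq : MPOC_LICQ D x y) :
    ∀ᶠ z : Vec n × Vec n in 𝓝 (x, y), ∀ t ≠ 0, LICQ D t z.1 z.2 := by
  obtain ⟨-, -, -, hxy, hy⟩ := hfeas
  filter_upwards [eventually_activeSubset D x y, eventually_eq_zero_of_mpocMap_eq_zero hlicq]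
    with z hact hinj t ht
  exact licq_of_eq_zero_of_mpocMap_eq_zero ht (fun i => (hy i).1) hxy hact hinj

/-- Theorem 1: MPOC-LICQ at a feasible point of R implies LICQ at
all feasible points of S(t) close to it, for all sufficiently small t > 0. -/
theorem statement4 {n : ℕ} {P Q : Type*} [Fintype P] [Fintype Q]
    (D : Setting n P Q) (x y : Vec n)
    (hfeas : feasR D x y) (hlicq : MPOC_LICQ D x y) :
    ∃ tbar > (0 : ℝ), ∃ δ > (0 : ℝ), ∀ t : ℝ, 0 < t → t < tbar →
      ∀ x' y' : Vec n, feasS D t x' y' →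
        ‖((x', y') : Vec n × Vec n) - (x, y)‖ < δ → LICQ D t x' y' := by
  obtain ⟨δ, hδ, hnear⟩ := Metric.eventually_nhds_iff.1 (eventually_licq D hfeas hlicq)
  refine ⟨1, one_pos, δ, hδ, fun t ht _ x' y' _ hdist => ?_⟩
  rw [← dist_eq_norm] at hdist
  exact hnear hdist t ht.ne'

end Scholtes
end
end

section
/- Let (x,y) be a Karush–Kuhn–Tucker point of the Scholtes-type regularization S(t) for some t > 0. Then the index set E(y) ∪ H(x,y) consists of at least n−s−1 elements, the index set N(y) consists of at most s elements, and at most one index belongs to none of these sets, i.e. |O(x,y)| ≤ 1. -/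
open scoped Classical
open Finset Filter Topology

noncomputable section
namespace Scholtes

variable {n : ℕ} {P Q : Type*} [Fintype P] [Fintype Q]

/-! Outside `E ∪ N ∪ H` no constraint on `y_i` is active, so the `y_i`-component of the KKT
equation reads `c_i = μ₃`; since the `c_i` are pairwise different, this happens for at most one
index. If more than `s` of the `y_i` vanished, then `∑ y_i ≤ (n - s - 1)(1 + ε) < n - s` because
`(n - s) ε ≤ 1`, contradicting feasibility. The bound on `|E ∪ H|` follows by counting. -/

theorem Setting.sub_mul_ε_le_one (D : Setting n P Q) : ((n : ℝ) - D.s) * D.ε ≤ 1 := by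
  have hns : (0 : ℝ) < n - D.s := sub_pos.mpr (by exact_mod_cast D.hs)
  have h := D.hεle
  rwa [le_div_iff₀ hns, mul_comm] at h

theorem sum_le_card_compl_Nact_mul (y : Vec n) {b : ℝ} (hb : ∀ i, y i ≤ b) :
    ∑ i, y i ≤ ((n : ℝ) - (Nact y).card) * b := by
  have hN : ∑ i ∈ Nact y, y i = 0 := sum_eq_zero fun i hi => (mem_filter.mp hi).2
  calc ∑ i, y i = ∑ i ∈ (Nact y)ᶜ, y i := by
        rw [← sum_compl_add_sum (Nact y), hN, add_zero]
    _ ≤ (Nact y)ᶜ.card • b := sum_le_card_nsmul _ _ _ fun i _ => hb i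
    _ = ((n : ℝ) - (Nact y).card) * b := by
        rw [nsmul_eq_mul, card_compl, Fintype.card_fin,
          Nat.cast_sub ((card_le_univ _).trans_eq (Fintype.card_fin n))]

theorem card_Nact_le {D : Setting n P Q} {t : ℝ} {x y : Vec n} (hfeas : feasS D t x y) :
    (Nact y).card ≤ D.s := by
  obtain ⟨-, -, hsum, -, hy⟩ := hfeas
  by_contra! hN
  have hNs : (D.s : ℝ) + 1 ≤ (Nact y).card := by exact_mod_cast hN
  have hbound := sum_le_card_compl_Nact_mul y fun i => (hy i).2
  have hε := D.hεpos
  nlinarith [D.sub_mul_ε_le_one]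

theorem KKTEq.c_eq_mu3_of_mem_Oact {D : Setting n P Q} {t : ℝ} {x y : Vec n}
    {M : SMult n P Q} (heq : KKTEq D t x y M) {i : Fin n} (hi : i ∈ Oact D t x y) :
    D.c i = M.mu3 := by
  simp only [Oact, Hact, mem_compl, mem_union, not_or] at hi
  obtain ⟨⟨hE, hN⟩, hGe, hLe⟩ := hi
  have hcomp := congrArg (fun z : Vec n × Vec n => z.2 i) heq
  simp only [Prod.snd_add, Prod.snd_sub, Prod.smul_snd, Prod.snd_sum, ey, eAll, hvec,
    Pi.add_apply, Pi.sub_apply, Finset.sum_apply, Pi.smul_apply, Pi.single_apply, smul_eq_mul,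
    mul_ite, mul_one, mul_zero, sum_ite_eq, smul_zero, Pi.zero_apply, sum_const_zero,
    if_neg hE, if_neg hN, if_neg hGe, if_neg hLe] at hcomp
  linarith

theorem card_Oact_le_one {D : Setting n P Q} {t : ℝ} {x y : Vec n} {M : SMult n P Q}
    (heq : KKTEq D t x y M) : (Oact D t x y).card ≤ 1 :=
  card_le_one.mpr fun _ ha _ hb =>
    D.hcinj ((heq.c_eq_mu3_of_mem_Oact ha).trans (heq.c_eq_mu3_of_mem_Oact hb).symm)

theorem le_card_EH_add_card_Nact_add_card_Oact (D : Setting n P Q) (t : ℝ) (x y : Vec n) :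
    n ≤ (Eact D y ∪ Hact t x y).card + (Nact y).card + (Oact D t x y).card := by
  have hsub : Eact D y ∪ Nact y ∪ Hact t x y ⊆ (Eact D y ∪ Hact t x y) ∪ Nact y := by
    intro i
    simp only [mem_union]
    tauto
  have hcover := card_compl_add_card (Eact D y ∪ Nact y ∪ Hact t x y)
  have hA := (card_le_card hsub).trans (card_union_le _ _)
  rw [Fintype.card_fin] at hcover
  rw [Oact]
  omega

theorem statement7_general {n : ℕ} {P Q : Type*} [Fintype P] [Fintype Q]
    (D : Setting n P Q) (t : ℝ) (x y : Vec n)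
    (hK : KKT D t x y) :
    n - D.s - 1 ≤ (Eact D y ∪ Hact t x y).card ∧
    (Nact y).card ≤ D.s ∧
    (Oact D t x y).card ≤ 1 := by
  obtain ⟨M, hfeas, -, -, -, -, -, -, -, heq⟩ := hK
  have hN := card_Nact_le hfeas
  have hO := card_Oact_le_one heq
  have hcount := le_card_EH_add_card_Nact_add_card_Oact D t x y
  exact ⟨by omega, hN, hO⟩

/-- Lemma 2b: at a KKT point of S(t), |E(y) ∪ H(x,y)| ≥ n−s−1,
|N(y)| ≤ s and |O(x,y)| ≤ 1. -/
theorem statement7 {n : ℕ} {P Q : Type*} [Fintype P] [Fintype Q]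
    (D : Setting n P Q) (t : ℝ) (ht : 0 < t) (x y : Vec n)
    (hK : KKT D t x y) :
    n - D.s - 1 ≤ (Eact D y ∪ Hact t x y).card ∧
    (Nact y).card ≤ D.s ∧
    (Oact D t x y).card ≤ 1 :=
  statement7_general D t x y hK

end Scholtes
end
end
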